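/- Let C be an N×M and D an M×N matrix with nonnegative integer entries, and set A = CD, B = DC. Realize the edge sets E_A and E_B as pairs from E_C and E_D. Define ζ : X_A → X_B by ζ((c_n, d_n)_{n∈ℕ}) = ((d_n, c_{n+1}))_{n∈ℕ} and η : X_B → X_A by η((d_n, c_n)_{n∈ℕ}) = ((c_n, d_{n+1}))_{n∈ℕ}. Then ζ and η are well-defined continuous maps satisfying η ∘ ζ = σ_A, ζ ∘ η = σ_B, ζ ∘ σ_A = σ_B ∘ ζ, and η ∘ σ_B = σ_A ∘ η. -/

import Mathlib

open Matrix

/-- The edge set of the directed graph of a rectangular matrix `C` with nonnegative integer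
entries: there are `C i j` edges from vertex `i` to vertex `j`. -/
def Edge {N M : ℕ} (C : Matrix (Fin N) (Fin M) ℕ) : Type :=
  Σ i : Fin N, Σ j : Fin M, Fin (C i j)

instance {N M : ℕ} (C : Matrix (Fin N) (Fin M) ℕ) : Fintype (Edge C) := by
  unfold Edge
  haveI : ∀ i j, Fintype (Fin (C i j)) := fun i j => Fin.fintype (C i j)
  infer_instance

instance {N M : ℕ} (C : Matrix (Fin N) (Fin M) ℕ) : DecidableEq (Edge C) := by
  unfold Edge; infer_instance

/-- The source vertex of an edge. -/
def Edge.src {N M : ℕ} {C : Matrix (Fin N) (Fin M) ℕ} (e : Edge C) : Fin N := e.1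

/-- The target vertex of an edge. -/
def Edge.tar {N M : ℕ} {C : Matrix (Fin N) (Fin M) ℕ} (e : Edge C) : Fin M := e.2.1

/-- The edge set of `A = CD`, realized as composable pairs `(c, d)` of edges of `C` and `D`. -/
def PairEdgeA {N M : ℕ} (C : Matrix (Fin N) (Fin M) ℕ) (D : Matrix (Fin M) (Fin N) ℕ) :
    Type :=
  {p : Edge C × Edge D // p.1.tar = p.2.src}

/-- The edge set of `B = DC`, realized as composable pairs `(d, c)` of edges of `D` and `C`. -/
def PairEdgeB {N M : ℕ} (C : Matrix (Fin N) (Fin M) ℕ) (D : Matrix (Fin M) (Fin N) ℕ) :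
    Type :=
  {p : Edge D × Edge C // p.1.tar = p.2.src}

instance {N M : ℕ} (C : Matrix (Fin N) (Fin M) ℕ) (D : Matrix (Fin M) (Fin N) ℕ) :
    Fintype (PairEdgeA C D) := by unfold PairEdgeA; infer_instance

instance {N M : ℕ} (C : Matrix (Fin N) (Fin M) ℕ) (D : Matrix (Fin M) (Fin N) ℕ) :
    Fintype (PairEdgeB C D) := by unfold PairEdgeB; infer_instance

instance {N M : ℕ} (C : Matrix (Fin N) (Fin M) ℕ) (D : Matrix (Fin M) (Fin N) ℕ) :
    DecidableEq (PairEdgeA C D) := by unfold PairEdgeA; infer_instance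

instance {N M : ℕ} (C : Matrix (Fin N) (Fin M) ℕ) (D : Matrix (Fin M) (Fin N) ℕ) :
    DecidableEq (PairEdgeB C D) := by unfold PairEdgeB; infer_instance

instance {N M : ℕ} (C : Matrix (Fin N) (Fin M) ℕ) (D : Matrix (Fin M) (Fin N) ℕ) :
    TopologicalSpace (PairEdgeA C D) := ⊥

instance {N M : ℕ} (C : Matrix (Fin N) (Fin M) ℕ) (D : Matrix (Fin M) (Fin N) ℕ) :
    DiscreteTopology (PairEdgeA C D) := ⟨rfl⟩

instance {N M : ℕ} (C : Matrix (Fin N) (Fin M) ℕ) (D : Matrix (Fin M) (Fin N) ℕ) :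
    TopologicalSpace (PairEdgeB C D) := ⊥

instance {N M : ℕ} (C : Matrix (Fin N) (Fin M) ℕ) (D : Matrix (Fin M) (Fin N) ℕ) :
    DiscreteTopology (PairEdgeB C D) := ⟨rfl⟩

/-- The one-sided topological Markov shift space `X_A` for `A = CD`, realized on the pair
edge set `E_A`, with the topology induced from the product topology. -/
abbrev XA {N M : ℕ} (C : Matrix (Fin N) (Fin M) ℕ) (D : Matrix (Fin M) (Fin N) ℕ) : Type :=
  {x : ℕ → PairEdgeA C D // ∀ n, (x n).val.2.tar = (x (n + 1)).val.1.src}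

/-- The one-sided topological Markov shift space `X_B` for `B = DC`, realized on the pair
edge set `E_B`, with the topology induced from the product topology. -/
abbrev XB {N M : ℕ} (C : Matrix (Fin N) (Fin M) ℕ) (D : Matrix (Fin M) (Fin N) ℕ) : Type :=
  {y : ℕ → PairEdgeB C D // ∀ n, (y n).val.2.tar = (y (n + 1)).val.1.src}

/-- The shift map `σ_A` on `X_A`. -/
def shiftA {N M : ℕ} (C : Matrix (Fin N) (Fin M) ℕ) (D : Matrix (Fin M) (Fin N) ℕ)
    (x : XA C D) : XA C D :=
  ⟨fun n => x.val (n + 1), fun n => x.prop (n + 1)⟩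

/-- The shift map `σ_B` on `X_B`. -/
def shiftB {N M : ℕ} (C : Matrix (Fin N) (Fin M) ℕ) (D : Matrix (Fin M) (Fin N) ℕ)
    (y : XB C D) : XB C D :=
  ⟨fun n => y.val (n + 1), fun n => y.prop (n + 1)⟩

section

variable {N M : ℕ} {C : Matrix (Fin N) (Fin M) ℕ} {D : Matrix (Fin M) (Fin N) ℕ}

def zetaMap (x : XA C D) : XB C D :=
  ⟨fun n => ⟨((x.val n).val.2, (x.val (n + 1)).val.1), x.prop n⟩,
    fun n => (x.val (n + 1)).prop⟩

/-- `XB C D` is `XA D C` by definition, so `η` is `ζ` for the pair `(D, C)`. -/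
def etaMap : XB C D → XA C D :=
  zetaMap (C := D) (D := C)

theorem continuous_zetaMap : Continuous (zetaMap : XA C D → XB C D) := by
  refine Continuous.subtype_mk (continuous_pi fun n => ?_) _
  -- the `n`-th coordinate factors through the discrete space of composable pairs `(x n, x (n+1))`
  let Pairs := {p : PairEdgeA C D × PairEdgeA C D // p.1.val.2.tar = p.2.val.1.src}
  let window : XA C D → Pairs := fun x => ⟨(x.val n, x.val (n + 1)), x.prop n⟩
  have hwindow : Continuous window :=
    (((continuous_apply n).comp continuous_subtype_val).prodMk
      ((continuous_apply (n + 1)).comp continuous_subtype_val)).subtype_mk _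
  let symbol : Pairs → PairEdgeB C D := fun p => ⟨(p.1.1.val.2, p.1.2.val.1), p.2⟩
  exact (continuous_of_discreteTopology (f := symbol)).comp hwindow

theorem continuous_etaMap : Continuous (etaMap : XB C D → XA C D) :=
  continuous_zetaMap (C := D) (D := C)

theorem etaMap_zetaMap (x : XA C D) : etaMap (zetaMap x) = shiftA C D x :=
  rfl

theorem zetaMap_etaMap (y : XB C D) : zetaMap (etaMap y) = shiftB C D y :=
  rfl

theorem zetaMap_shiftA (x : XA C D) : zetaMap (shiftA C D x) = shiftB C D (zetaMap x) :=
  rfl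

theorem etaMap_shiftB (y : XB C D) : etaMap (shiftB C D y) = shiftA C D (etaMap y) :=
  rfl

end

/-- Let `C`, `D` be rectangular nonnegative integer matrices, `A = CD`,
`B = DC`.  The maps `ζ : X_A → X_B`, `ζ((c_n,d_n)_n) = ((d_n,c_{n+1}))_n`, and
`η : X_B → X_A`, `η((d_n,c_n)_n) = ((c_n,d_{n+1}))_n`, are well-defined continuous maps
satisfying `η ∘ ζ = σ_A`, `ζ ∘ η = σ_B`, `ζ ∘ σ_A = σ_B ∘ ζ` and `η ∘ σ_B = σ_A ∘ η`. -/
theorem stmt_11 (N M : ℕ) (C : Matrix (Fin N) (Fin M) ℕ) (D : Matrix (Fin M) (Fin N) ℕ) :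
    ∃ (ζ : XA C D → XB C D) (η : XB C D → XA C D),
      Continuous ζ ∧ Continuous η ∧
      (∀ (x : XA C D) (n : ℕ),
        ((ζ x).val n).val.1 = (x.val n).val.2 ∧
        ((ζ x).val n).val.2 = (x.val (n + 1)).val.1) ∧
      (∀ (y : XB C D) (n : ℕ),
        ((η y).val n).val.1 = (y.val n).val.2 ∧
        ((η y).val n).val.2 = (y.val (n + 1)).val.1) ∧
      (∀ x, η (ζ x) = shiftA C D x) ∧
      (∀ y, ζ (η y) = shiftB C D y) ∧
      (∀ x, ζ (shiftA C D x) = shiftB C D (ζ x)) ∧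
      (∀ y, η (shiftB C D y) = shiftA C D (η y)) :=
  ⟨zetaMap, etaMap, continuous_zetaMap, continuous_etaMap, fun _ _ => ⟨rfl, rfl⟩,
    fun _ _ => ⟨rfl, rfl⟩, etaMap_zetaMap, zetaMap_etaMap, zetaMap_shiftA, etaMap_shiftB⟩
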